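/- arXiv:2112.02941 — 2 statements merged into one kernel-verified Lean document; each statement's English description precedes it below -/
import Mathlib

section
/- Assume P_x(τ_∂ < ∞) = 1 for every x ∈ χ, let λ₀ ∈ (0,1) be the spectral radius of K, assume every state is accessible from μ (for every x ∈ χ there exists t ∈ ℕ with (μK^t)(x) > 0), and let p ∈ (0,1]. Then for every z with 1 ≤ z ≤ (1−p)/(1−λ₀), the series Σ_{s=0}^{∞} P_μ(τ_∂ > s)·(1 − (1−p)/z)^{−(s+1)} of nonnegative terms diverges (its partial sums tend to +∞). -/
open Finset Filter

/-- `muK K μ t y = (μ K^t)(y)`, the sub-probability of being alive at `y` at time `t`. -/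
noncomputable def muK {χ : Type*} [Fintype χ] [DecidableEq χ]
    (K : Matrix χ χ ℝ) (μ : χ → ℝ) (t : ℕ) (y : χ) : ℝ :=
  ∑ x, μ x * (K ^ t) x y

/-- The survival probability `P_μ(τ_∂ > t) = ∑_y (μ K^t)(y)`. -/
noncomputable def survM {χ : Type*} [Fintype χ] [DecidableEq χ]
    (K : Matrix χ χ ℝ) (μ : χ → ℝ) (t : ℕ) : ℝ :=
  ∑ y, muK K μ t y

/-- `l` is the spectral radius of the real matrix `K`: the maximum modulus of its
complex eigenvalues. -/
def IsSpectralRadius {χ : Type*} [Fintype χ] [DecidableEq χ]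
    (K : Matrix χ χ ℝ) (l : ℝ) : Prop :=
  (∀ z ∈ spectrum ℂ (K.map Complex.ofReal), ‖z‖ ≤ l) ∧
  (∃ z ∈ spectrum ℂ (K.map Complex.ofReal), ‖z‖ = l)

section Aux

variable {χ : Type*} [Fintype χ] [Nonempty χ] [DecidableEq χ]

lemma powK_nonneg (K : Matrix χ χ ℝ) (hK0 : ∀ x y, 0 ≤ K x y) :
    ∀ s x y, 0 ≤ (K ^ s) x y := by
  intro s
  induction s with
  | zero => intro x y; rw [pow_zero]; by_cases h : x = y <;> simp [Matrix.one_apply, h]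
  | succ n ih =>
    intro x y
    rw [pow_succ, Matrix.mul_apply]
    exact Finset.sum_nonneg fun w _ => mul_nonneg (ih x w) (hK0 w y)

lemma powM_map (K : Matrix χ χ ℝ) (s : ℕ) :
    (K.map Complex.ofReal) ^ s = (K ^ s).map Complex.ofReal := by
  have : (K.map Complex.ofReal) = (Complex.ofRealHom.mapMatrix : Matrix χ χ ℝ →+* Matrix χ χ ℂ) K := rfl
  rw [this, ← map_pow]
  rfl

lemma spec_pow_le (K : Matrix χ χ ℝ) (hK0 : ∀ x y, 0 ≤ K x y) (lam : ℝ)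
    (hlam : ∃ w ∈ spectrum ℂ (K.map Complex.ofReal), ‖w‖ = lam) (s : ℕ) :
    lam ^ s ≤ ∑ x, ∑ y, (K ^ s) x y := by
  obtain ⟨w, hwmem, hwabs⟩ := hlam
  set M : Matrix χ χ ℂ := K.map Complex.ofReal with hM
  have hdet : ((algebraMap ℂ (Matrix χ χ ℂ)) w - M).det = 0 := by
    by_contra h
    exact (spectrum.mem_iff.mp hwmem)
      ((Matrix.isUnit_iff_isUnit_det _).mpr (isUnit_iff_ne_zero.mpr h))
  obtain ⟨v, hv0, hv⟩ := (Matrix.exists_mulVec_eq_zero_iff).mpr hdet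
  have hMv : M.mulVec v = w • v := by
    rw [Algebra.algebraMap_eq_smul_one, Matrix.sub_mulVec, Matrix.smul_mulVec,
      Matrix.one_mulVec, sub_eq_zero] at hv
    exact hv.symm
  have hpow : ∀ n, (M ^ n).mulVec v = (w ^ n) • v := by
    intro n
    induction n with
    | zero => simp [Matrix.one_mulVec]
    | succ k ih =>
      rw [pow_succ', ← Matrix.mulVec_mulVec, ih, Matrix.mulVec_smul, hMv, smul_smul, ← pow_succ]
  -- pick coordinate with maximal modulus
  obtain ⟨i, -, hi⟩ := Finset.exists_max_image (univ : Finset χ)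
    (fun j => ‖v j‖) ⟨Classical.arbitrary χ, mem_univ _⟩
  have hvi : 0 < ‖v i‖ := by
    obtain ⟨j, hj⟩ := Function.ne_iff.mp hv0
    exact lt_of_lt_of_le (by simpa using hj) (hi j (mem_univ j))
  have habs : ∀ x y, ‖(M ^ s) x y‖ = (K ^ s) x y := by
    intro x y
    rw [hM, powM_map]
    simp [Matrix.map_apply, abs_of_nonneg (powK_nonneg K hK0 s x y)]
  have key : lam ^ s * ‖v i‖ ≤ (∑ y, (K ^ s) i y) * ‖v i‖ := by
    have h1 : lam ^ s * ‖v i‖ = ‖((M ^ s).mulVec v) i‖ := by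
      rw [hpow s]
      simp [Pi.smul_apply, smul_eq_mul, map_mul, map_pow, hwabs]
    rw [h1]; simp only [Matrix.mulVec, dotProduct]
    calc ‖∑ j, (M ^ s) i j * v j‖
        ≤ ∑ j, ‖(M ^ s) i j * v j‖ := by
          exact norm_sum_le _ _
      _ = ∑ j, (K ^ s) i j * ‖v j‖ := by
          refine Finset.sum_congr rfl fun j _ => ?_
          rw [norm_mul, habs]
      _ ≤ ∑ j, (K ^ s) i j * ‖v i‖ := by
          refine Finset.sum_le_sum fun j _ => ?_
          exact mul_le_mul_of_nonneg_left (hi j (mem_univ j)) (powK_nonneg K hK0 s i j)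
      _ = (∑ y, (K ^ s) i y) * ‖v i‖ := by rw [Finset.sum_mul]
  have h2 : lam ^ s ≤ ∑ y, (K ^ s) i y := le_of_mul_le_mul_right key hvi
  refine h2.trans ?_
  exact Finset.single_le_sum (fun x _ => Finset.sum_nonneg fun y _ => powK_nonneg K hK0 s x y)
    (mem_univ i)

lemma muK_nonneg (K : Matrix χ χ ℝ) (hK0 : ∀ x y, 0 ≤ K x y) (μ : χ → ℝ)
    (hμ0 : ∀ x, 0 ≤ μ x) (t : ℕ) (y : χ) : 0 ≤ muK K μ t y :=
  Finset.sum_nonneg fun x _ => mul_nonneg (hμ0 x) (powK_nonneg K hK0 t x y)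

lemma survM_nonneg (K : Matrix χ χ ℝ) (hK0 : ∀ x y, 0 ≤ K x y) (μ : χ → ℝ)
    (hμ0 : ∀ x, 0 ≤ μ x) (t : ℕ) : 0 ≤ survM K μ t :=
  Finset.sum_nonneg fun y _ => muK_nonneg K hK0 μ hμ0 t y

lemma muK_add (K : Matrix χ χ ℝ) (μ : χ → ℝ) (t s : ℕ) (y : χ) :
    muK K μ (t + s) y = ∑ x, muK K μ t x * (K ^ s) x y := by
  simp only [muK, pow_add, Matrix.mul_apply, Finset.mul_sum, Finset.sum_mul, mul_assoc]
  exact Finset.sum_comm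

end Aux

set_option maxHeartbeats 1000000 in
/-- For `1 ≤ z ≤ (1−p)/(1−λ₀)` the series
`∑_{s=0}^{∞} P_μ(τ_∂ > s)·(1 − (1−p)/z)^{−(s+1)}` diverges: its partial sums tend
to `+∞`. -/
theorem series_diverges_below_threshold
    {χ : Type*} [Fintype χ] [Nonempty χ] [DecidableEq χ]
    (K : Matrix χ χ ℝ) (hK0 : ∀ x y, 0 ≤ K x y) (hK1 : ∀ x, ∑ y, K x y ≤ 1)
    (μ : χ → ℝ) (hμ0 : ∀ x, 0 ≤ μ x) (hμ1 : ∑ x, μ x = 1)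
    (hkill : ∀ x : χ, Filter.Tendsto (fun t => ∑ y, (K ^ t) x y) Filter.atTop (nhds 0))
    (lam : ℝ) (hlam0 : 0 < lam) (hlam1 : lam < 1) (hspec : IsSpectralRadius K lam)
    (hacc : ∀ x : χ, ∃ t : ℕ, 0 < muK K μ t x)
    (p : ℝ) (hp : 0 < p) (hp1 : p ≤ 1)
    (z : ℝ) (hz1 : 1 ≤ z) (hz2 : z ≤ (1 - p) / (1 - lam)) :
    Filter.Tendsto
      (fun N => ∑ s ∈ Finset.range N, survM K μ s * ((1 - (1 - p) / z)⁻¹) ^ (s + 1))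
      Filter.atTop Filter.atTop := by
  set r : ℝ := 1 - (1 - p) / z with hrdef
  have hz0 : (0 : ℝ) < z := lt_of_lt_of_le one_pos hz1
  have hr0 : 0 < r := by
    have h1 : (1 - p) / z ≤ 1 - p := div_le_self (by linarith) hz1
    have : (1 - p) / z < 1 := lt_of_le_of_lt h1 (by linarith)
    simp only [hrdef]; linarith
  have hrlam : r ≤ lam := by
    have hl : (0 : ℝ) < 1 - lam := by linarith
    have h1 : z * (1 - lam) ≤ 1 - p := (le_div_iff₀ hl).mp hz2
    have h2 : 1 - lam ≤ (1 - p) / z := (le_div_iff₀ hz0).mpr (by linarith [h1])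
    simp only [hrdef]; linarith
  have hnn : ∀ s, 0 ≤ survM K μ s * (r⁻¹) ^ (s + 1) := fun s =>
    mul_nonneg (survM_nonneg K hK0 μ hμ0 s) (pow_nonneg (inv_nonneg.mpr hr0.le) _)
  rw [← not_summable_iff_tendsto_nat_atTop_of_nonneg hnn]
  intro hsum
  -- Summability of survM s * r⁻¹ ^ s
  have hs1 : Summable (fun s => survM K μ s * r⁻¹ ^ s) := by
    have h := hsum.mul_right r
    have heq : ∀ s : ℕ, survM K μ s * r⁻¹ ^ (s + 1) * r = survM K μ s * r⁻¹ ^ s := by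
      intro s
      rw [pow_succ, mul_assoc, mul_assoc, inv_mul_cancel₀ hr0.ne', mul_one]
    simpa only [heq] using h
  choose t ht using hacc
  -- shifted summability
  have hshift : ∀ x : χ, Summable (fun s => survM K μ (t x + s) * r⁻¹ ^ s) := by
    intro x
    have h2 : Summable (fun s => survM K μ (s + t x) * r⁻¹ ^ (s + t x)) :=
      (summable_nat_add_iff (t x)).mpr hs1
    have h3 := h2.mul_right (r ^ (t x))
    have heq : ∀ s : ℕ, survM K μ (s + t x) * r⁻¹ ^ (s + t x) * r ^ (t x)
        = survM K μ (t x + s) * r⁻¹ ^ s := by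
      intro s
      have hx : r⁻¹ ^ (s + t x) * r ^ (t x) = r⁻¹ ^ s := by
        rw [pow_add, mul_assoc, ← mul_pow, inv_mul_cancel₀ hr0.ne', one_pow, mul_one]
      rw [add_comm (t x) s, mul_assoc, hx]
    simpa only [heq] using h3
  have hg : Summable (fun s => ∑ x, (muK K μ (t x) x)⁻¹ * (survM K μ (t x + s) * r⁻¹ ^ s)) :=
    summable_sum fun x _ => (hshift x).mul_left _
  -- comparison with geometric series
  have hcomp : ∀ s : ℕ, (lam / r) ^ s
      ≤ ∑ x, (muK K μ (t x) x)⁻¹ * (survM K μ (t x + s) * r⁻¹ ^ s) := by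
    intro s
    have hrow : ∀ x : χ, muK K μ (t x) x * (∑ y, (K ^ s) x y) ≤ survM K μ (t x + s) := by
      intro x
      have : survM K μ (t x + s) = ∑ x', muK K μ (t x) x' * (∑ y, (K ^ s) x' y) := by
        simp only [survM, muK_add, Finset.mul_sum]
        exact Finset.sum_comm
      rw [this]
      exact Finset.single_le_sum (f := fun x' => muK K μ (t x) x' * ∑ y, (K ^ s) x' y)
        (fun x' _ => mul_nonneg (muK_nonneg K hK0 μ hμ0 _ _)
        (Finset.sum_nonneg fun y _ => powK_nonneg K hK0 s x' y)) (mem_univ x)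
    have hrowle : ∀ x : χ, (∑ y, (K ^ s) x y)
        ≤ (muK K μ (t x) x)⁻¹ * survM K μ (t x + s) := by
      intro x
      rw [le_inv_mul_iff₀ (ht x)]
      exact hrow x
    have hspecle : lam ^ s ≤ ∑ x, (muK K μ (t x) x)⁻¹ * survM K μ (t x + s) :=
      (spec_pow_le K hK0 lam hspec.2 s).trans (Finset.sum_le_sum fun x _ => hrowle x)
    calc (lam / r) ^ s = lam ^ s * r⁻¹ ^ s := by
          rw [div_pow, div_eq_mul_inv, inv_pow]
      _ ≤ (∑ x, (muK K μ (t x) x)⁻¹ * survM K μ (t x + s)) * r⁻¹ ^ s :=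
          mul_le_mul_of_nonneg_right hspecle (pow_nonneg (inv_nonneg.mpr hr0.le) _)
      _ = ∑ x, (muK K μ (t x) x)⁻¹ * (survM K μ (t x + s) * r⁻¹ ^ s) := by
          rw [Finset.sum_mul]
          exact Finset.sum_congr rfl fun x _ => by ring
  have hgeo : Summable (fun s : ℕ => (lam / r) ^ s) :=
    Summable.of_nonneg_of_le (fun s => pow_nonneg (div_nonneg hlam0.le hr0.le) s) hcomp hg
  rw [summable_geometric_iff_norm_lt_one] at hgeo
  have : (1 : ℝ) ≤ lam / r := (one_le_div hr0).mpr hrlam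
  rw [Real.norm_eq_abs, abs_of_nonneg (div_nonneg hlam0.le hr0.le)] at hgeo
  linarith
end

section
/- Let p ∈ (0,1] and T ∈ ℕ, and let Ê, R, ν, Z, c be as in the fixed-point computation: Ê := {(t,f) : t ∈ {0,…,T}, f : {0,…,t} → χ}, R((t,f),(s,g)) := p·W_s(g) + (1−p)·𝟙(t ≤ s and g(i) = f(i) for all i ≤ t)·Π_{i=t}^{s−1} K(g(i),g(i+1)), Z the unique solution in [1,∞) of z = p·Σ_{s=0}^{T} P_μ(τ_∂>s)·(1 − (1−p)/z)^{−(s+1)}, c := (1 − (1−p)/Z)^{−1}, and ν(t,f) := (p/Z)·c^{t+1}·W_t(f). Then ν is the UNIQUE nonnegative function α : Ê → ℝ with Σ_{e∈Ê} α(e) = 1 satisfying the normalized fixed-point equation α(e') = (Σ_{e∈Ê} α(e)·R(e,e')) / (Σ_{e,e''∈Ê} α(e)·R(e,e'')) for all e' ∈ Ê. -/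
open Finset Filter

/-- Extend a path `f : Fin (n+1) → χ` to a function `ℕ → χ` by freezing its last value. -/
noncomputable def pad {χ : Type*} {n : ℕ} (f : Fin (n + 1) → χ) : ℕ → χ :=
  fun i => f ⟨min i n, Nat.lt_succ_of_le (min_le_right i n)⟩

/-- `pathW K μ t f = μ(f 0) · ∏_{i=0}^{t-1} K(f i, f (i+1))`, the weight
`P_μ(X_0 = f 0, …, X_t = f t, τ_∂ > t)` of a surviving path. -/
noncomputable def pathW {χ : Type*} (K : χ → χ → ℝ) (μ : χ → ℝ) (t : ℕ) (f : ℕ → χ) : ℝ :=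
  μ (f 0) * ∏ i ∈ Finset.range t, K (f i) (f (i + 1))

/-- The survival probability `P_μ(τ_∂ > t) = ∑_{f : {0,…,t} → χ} W_t(f)`. -/
noncomputable def surv {χ : Type*} [Fintype χ] (K : χ → χ → ℝ) (μ : χ → ℝ) (t : ℕ) : ℝ :=
  ∑ f : Fin (t + 1) → χ, pathW K μ t (pad f)

/-- `Ê = {(t,f) : t ∈ {0,…,T}, f : {0,…,t} → χ}`. -/
abbrev Ehat (χ : Type*) (T : ℕ) := (t : Fin (T + 1)) × (Fin (t.1 + 1) → χ)

/-- The mean replacement kernel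
`R((t,f),(s,g)) = p·W_s(g) + (1−p)·𝟙(t ≤ s, g|_{[0,t]} = f)·∏_{i=t}^{s−1} K(g i, g (i+1))`. -/
noncomputable def Rker {χ : Type*} [DecidableEq χ] (K : χ → χ → ℝ) (μ : χ → ℝ) (p : ℝ)
    {T : ℕ} (e e' : Ehat χ T) : ℝ :=
  p * pathW K μ e'.1.1 (pad e'.2)
    + (1 - p) *
      (if e.1.1 ≤ e'.1.1 ∧ ∀ i ∈ Finset.range (e.1.1 + 1), pad e'.2 i = pad e.2 i then
        ∏ i ∈ Finset.Ico e.1.1 e'.1.1, K (pad e'.2 i) (pad e'.2 (i + 1))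
      else 0)

/-- `ν(t,f) = (p/Z)·c^{t+1}·W_t(f)` with `c = (1 − (1−p)/Z)⁻¹`. -/
noncomputable def nuE {χ : Type*} (K : χ → χ → ℝ) (μ : χ → ℝ) (p Z : ℝ)
    {T : ℕ} (e : Ehat χ T) : ℝ :=
  (p / Z) * ((1 - (1 - p) / Z)⁻¹) ^ (e.1.1 + 1) * pathW K μ e.1.1 (pad e.2)

section Aux

variable {χ : Type*}

/-- Restriction of a path. -/
def restr {s t : ℕ} (h : t ≤ s) (g : Fin (s + 1) → χ) : Fin (t + 1) → χ :=
  fun i => g ⟨i.1, by omega⟩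

lemma pad_restr {s t : ℕ} (h : t ≤ s) (g : Fin (s + 1) → χ) {i : ℕ} (hi : i ≤ t) :
    pad (restr h g) i = pad g i := by
  unfold pad restr
  congr 1
  ext
  simp [Nat.min_eq_left hi, Nat.min_eq_left (hi.trans h)]

lemma restr_self {s : ℕ} (g : Fin (s + 1) → χ) : restr (le_refl s) g = g := rfl

lemma restr_eq_of_cond {T : ℕ} {s t : Fin (T+1)} (h : t.1 ≤ s.1) (g : Fin (s.1 + 1) → χ)
    (f : Fin (t.1 + 1) → χ) (hc : ∀ i ∈ Finset.range (t.1 + 1), pad g i = pad f i) :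
    f = restr h g := by
  funext i
  have hi : i.1 ≤ t.1 := Nat.lt_succ_iff.mp i.isLt
  have h1 : pad f i.1 = f i := by
    unfold pad; congr 1; ext; simp [Nat.min_eq_left hi]
  have h2 : pad g i.1 = restr h g i := by
    unfold pad restr; congr 1; ext; simp [Nat.min_eq_left (hi.trans h)]
  rw [← h1, ← hc i.1 (Finset.mem_range.mpr (Nat.lt_succ_of_le hi)), h2]

variable [Fintype χ] (K : χ → χ → ℝ) (μ : χ → ℝ)

lemma pathW_factor {s t : ℕ} (h : t ≤ s) (g : Fin (s + 1) → χ) :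
    pathW K μ t (pad (restr h g)) * ∏ i ∈ Finset.Ico t s, K (pad g i) (pad g (i + 1))
      = pathW K μ s (pad g) := by
  unfold pathW
  rw [pad_restr h g (Nat.zero_le t)]
  have : ∏ i ∈ Finset.range t, K (pad (restr h g) i) (pad (restr h g) (i+1))
      = ∏ i ∈ Finset.range t, K (pad g i) (pad g (i+1)) := by
    refine Finset.prod_congr rfl fun i hi => ?_
    have hi' := Finset.mem_range.mp hi
    rw [pad_restr h g (le_of_lt hi'), pad_restr h g (by omega)]
  rw [this, mul_assoc, Finset.prod_range_mul_prod_Ico _ h]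

lemma pathW_nonneg (hK0 : ∀ x y, 0 ≤ K x y) (hμ0 : ∀ x, 0 ≤ μ x) (t : ℕ) (f : ℕ → χ) :
    0 ≤ pathW K μ t f :=
  mul_nonneg (hμ0 _) (Finset.prod_nonneg fun _ _ => hK0 _ _)

lemma surv_nonneg (hK0 : ∀ x y, 0 ≤ K x y) (hμ0 : ∀ x, 0 ≤ μ x) (t : ℕ) :
    0 ≤ surv K μ t :=
  Finset.sum_nonneg fun _ _ => pathW_nonneg K μ hK0 hμ0 _ _

lemma surv_zero (hμ1 : ∑ x, μ x = 1) : surv K μ 0 = 1 := by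
  unfold surv pathW
  simp only [Finset.range_zero, Finset.prod_empty, mul_one]
  rw [← hμ1]
  exact Fintype.sum_equiv (Equiv.funUnique (Fin 1) χ) _ _ (fun f => rfl)

end Aux

set_option linter.unusedSectionVars false

section Main

variable {χ : Type*} [Fintype χ] [DecidableEq χ]
variable (K : χ → χ → ℝ) (μ : χ → ℝ)

/-- Sum over `Ehat` of the indicator part. -/
lemma sum_Q {T : ℕ} (α : Ehat χ T → ℝ) (s : Fin (T + 1)) (g : Fin (s.1 + 1) → χ) :
    ∑ e : Ehat χ T, α e *
      (if e.1.1 ≤ s.1 ∧ ∀ i ∈ Finset.range (e.1.1 + 1), pad g i = pad e.2 i then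
        ∏ i ∈ Finset.Ico e.1.1 s.1, K (pad g i) (pad g (i + 1)) else 0)
    = ∑ t : Fin (T + 1), if h : t.1 ≤ s.1 then
        α ⟨t, restr h g⟩ * ∏ i ∈ Finset.Ico t.1 s.1, K (pad g i) (pad g (i + 1)) else 0 := by
  rw [← Finset.univ_sigma_univ, Finset.sum_sigma]
  refine Finset.sum_congr rfl fun t _ => ?_
  by_cases h : t.1 ≤ s.1
  · rw [dif_pos h]
    have hpt : ∀ f : Fin (t.1 + 1) → χ,
        α ⟨t, f⟩ * (if (⟨t, f⟩ : Ehat χ T).1.1 ≤ s.1 ∧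
            ∀ i ∈ Finset.range ((⟨t, f⟩ : Ehat χ T).1.1 + 1), pad g i = pad f i then
          ∏ i ∈ Finset.Ico t.1 s.1, K (pad g i) (pad g (i + 1)) else 0)
        = if f = restr h g then
            α ⟨t, restr h g⟩ * ∏ i ∈ Finset.Ico t.1 s.1, K (pad g i) (pad g (i + 1)) else 0 := by
      intro f
      by_cases hf : f = restr h g
      · subst hf
        rw [if_pos rfl, if_pos ⟨h, fun i hi => (pad_restr h g (Nat.lt_succ_iff.mp
            (Finset.mem_range.mp hi))).symm⟩]
      · rw [if_neg hf, if_neg, mul_zero]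
        rintro ⟨h1, h2⟩
        exact hf (restr_eq_of_cond h g f h2)
    calc ∑ f : Fin (t.1 + 1) → χ, α ⟨t, f⟩ * _ = ∑ f : Fin (t.1 + 1) → χ,
          if f = restr h g then
            α ⟨t, restr h g⟩ * ∏ i ∈ Finset.Ico t.1 s.1, K (pad g i) (pad g (i + 1)) else 0 :=
        Finset.sum_congr rfl fun f _ => hpt f
      _ = _ := by rw [Finset.sum_ite_eq' Finset.univ (restr h g)
            (fun _ => α ⟨t, restr h g⟩ * ∏ i ∈ Finset.Ico t.1 s.1,
              K (pad g i) (pad g (i + 1))), if_pos (Finset.mem_univ _)]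
  · rw [dif_neg h]
    refine Finset.sum_eq_zero fun f _ => ?_
    rw [if_neg (fun hc => h hc.1), mul_zero]

/-- Collapse a `Fin (T+1)` sum with an `ite` on `t ≤ s` to a range sum. -/
lemma sum_fin_ite {T : ℕ} (s : Fin (T + 1)) (b : ℕ → ℝ) :
    (∑ t : Fin (T + 1), if t.1 ≤ s.1 then b t.1 else 0) = ∑ t ∈ Finset.range (s.1 + 1), b t := by
  rw [Fin.sum_univ_eq_sum_range (fun t => if t ≤ s.1 then b t else 0)]
  rw [← Finset.sum_subset (Finset.range_subset_range.mpr (Nat.succ_le_of_lt s.isLt))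
    (fun x _ hx => if_neg (fun hc => hx (Finset.mem_range.mpr (Nat.lt_succ_of_le hc))))]
  exact Finset.sum_congr rfl fun t ht => if_pos (Nat.lt_succ_iff.mp (Finset.mem_range.mp ht))

end Main

noncomputable def Aseq (p lam : ℝ) (s : ℕ) : ℝ := (p / lam) * ((1 - (1 - p) / lam)⁻¹) ^ (s + 1)

section Scalar

variable {p lam : ℝ}

lemma base_pos (hp : 0 < p) (hp1 : p ≤ 1) (hlam : 1 ≤ lam) : 0 < 1 - (1 - p) / lam := by
  have h0 : (0:ℝ) < lam := lt_of_lt_of_le one_pos hlam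
  have : (1 - p) / lam ≤ (1 - p) := by
    apply div_le_self (by linarith) hlam
  have : (1 - p) / lam < 1 := lt_of_le_of_lt this (by linarith)
  linarith

lemma cancel_c (hp : 0 < p) (hp1 : p ≤ 1) (hlam : 1 ≤ lam) : (lam - (1 - p)) * (1 - (1 - p) / lam)⁻¹ = lam := by
  have h0 : (0:ℝ) < lam := lt_of_lt_of_le one_pos hlam
  have h2 : lam - (1 - p) ≠ 0 := ne_of_gt (by linarith)
  have h1 : 1 - (1 - p) / lam = (lam - (1 - p)) / lam := by field_simp
  rw [h1, inv_div]
  field_simp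

lemma Aseq_nonneg (hp : 0 < p) (hp1 : p ≤ 1) (hlam : 1 ≤ lam) (s : ℕ) : 0 ≤ Aseq p lam s := by
  have h0 : (0:ℝ) < lam := lt_of_lt_of_le one_pos hlam
  have hb := base_pos hp hp1 hlam
  exact mul_nonneg (le_of_lt (div_pos hp h0)) (pow_nonneg (inv_nonneg.mpr hb.le) _)

lemma Aseq_key (hp : 0 < p) (hp1 : p ≤ 1) (hlam : 1 ≤ lam) (s : ℕ) :
    p + (1 - p) * ∑ t ∈ Finset.range s, Aseq p lam t = (lam - (1 - p)) * Aseq p lam s := by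
  have h0 : (0:ℝ) < lam := lt_of_lt_of_le one_pos hlam
  have hc := cancel_c hp hp1 hlam
  induction s with
  | zero =>
      simp only [Finset.range_zero, Finset.sum_empty, mul_zero, add_zero, Aseq]
      rw [pow_one, show (lam - (1-p)) * ((p/lam) * (1 - (1-p)/lam)⁻¹)
        = (p/lam) * ((lam - (1-p)) * (1 - (1-p)/lam)⁻¹) by ring, hc]
      field_simp
  | succ n ih =>
      rw [Finset.sum_range_succ, mul_add, ← add_assoc, ih]
      have : Aseq p lam (n + 1) = (1 - (1 - p) / lam)⁻¹ * Aseq p lam n := by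
        unfold Aseq; ring
      rw [this, show (lam - (1-p)) * ((1 - (1-p)/lam)⁻¹ * Aseq p lam n)
        = ((lam - (1-p)) * (1 - (1-p)/lam)⁻¹) * Aseq p lam n by ring, hc]
      ring

end Scalar

section Main2

variable {χ : Type*} [Fintype χ] [DecidableEq χ]
variable (K : χ → χ → ℝ) (μ : χ → ℝ)

lemma sum_prod_form {T : ℕ} (a : ℕ → ℝ) :
    ∑ e : Ehat χ T, a e.1.1 * pathW K μ e.1.1 (pad e.2)
      = ∑ t ∈ Finset.range (T + 1), a t * surv K μ t := by
  rw [← Finset.univ_sigma_univ, Finset.sum_sigma,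
    ← Fin.sum_univ_eq_sum_range (fun t => a t * surv K μ t)]
  refine Finset.sum_congr rfl fun t _ => ?_
  show ∑ f : Fin (t.1 + 1) → χ, a t.1 * pathW K μ t.1 (pad f) = _
  rw [← Finset.mul_sum]
  rfl

lemma sum_mul_Rker {T : ℕ} (p : ℝ) (β : Ehat χ T → ℝ) (s : Fin (T + 1))
    (g : Fin (s.1 + 1) → χ) :
    ∑ e : Ehat χ T, β e * Rker K μ p e ⟨s, g⟩
      = p * pathW K μ s.1 (pad g) * (∑ e : Ehat χ T, β e)
        + (1 - p) * ∑ t : Fin (T + 1), (if h : t.1 ≤ s.1 then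
            β ⟨t, restr h g⟩ * ∏ i ∈ Finset.Ico t.1 s.1, K (pad g i) (pad g (i + 1)) else 0) := by
  rw [← sum_Q K β s g, Finset.mul_sum, Finset.mul_sum, ← Finset.sum_add_distrib]
  refine Finset.sum_congr rfl fun e _ => ?_
  unfold Rker
  ring

end Main2

section Main3

variable {χ : Type*} [Fintype χ] [DecidableEq χ]
variable (K : χ → χ → ℝ) (μ : χ → ℝ)

lemma Aseq_key' {p lam : ℝ} (hp : 0 < p) (hp1 : p ≤ 1) (hlam : 1 ≤ lam) (s : ℕ) :
    p + (1 - p) * ∑ t ∈ Finset.range (s + 1), Aseq p lam t = lam * Aseq p lam s := by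
  rw [Aseq_key hp hp1 hlam (s + 1)]
  have h : Aseq p lam (s + 1) = (1 - (1 - p) / lam)⁻¹ * Aseq p lam s := by
    unfold Aseq; ring
  rw [h, ← mul_assoc, cancel_c hp hp1 hlam]

lemma eigen_prod_form {p lam : ℝ} (hp : 0 < p) (hp1 : p ≤ 1) (hlam : 1 ≤ lam) {T : ℕ}
    (hsum : ∑ e : Ehat χ T, Aseq p lam e.1.1 * pathW K μ e.1.1 (pad e.2) = 1)
    (s : Fin (T + 1)) (g : Fin (s.1 + 1) → χ) :
    ∑ e : Ehat χ T, (Aseq p lam e.1.1 * pathW K μ e.1.1 (pad e.2)) * Rker K μ p e ⟨s, g⟩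
      = lam * (Aseq p lam s.1 * pathW K μ s.1 (pad g)) := by
  rw [sum_mul_Rker K μ p (fun e => Aseq p lam e.1.1 * pathW K μ e.1.1 (pad e.2)) s g, hsum]
  have hd : ∀ t : Fin (T + 1),
      (if h : t.1 ≤ s.1 then
          (Aseq p lam t.1 * pathW K μ t.1 (pad (restr h g))) *
            ∏ i ∈ Finset.Ico t.1 s.1, K (pad g i) (pad g (i + 1)) else 0)
      = if t.1 ≤ s.1 then Aseq p lam t.1 * pathW K μ s.1 (pad g) else 0 := by
    intro t
    by_cases h : t.1 ≤ s.1
    · rw [dif_pos h, if_pos h, mul_assoc, pathW_factor K μ h g]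
    · rw [dif_neg h, if_neg h]
  rw [Finset.sum_congr rfl fun t _ => hd t,
    sum_fin_ite s (fun t => Aseq p lam t * pathW K μ s.1 (pad g)), ← Finset.sum_mul]
  linear_combination pathW K μ s.1 (pad g) * Aseq_key' hp hp1 hlam s.1

lemma fixed_point_form {p : ℝ} (hp : 0 < p) (hp1 : p ≤ 1) {T : ℕ}
    (α : Ehat χ T → ℝ) (lam : ℝ) (hlam : 1 ≤ lam)
    (hαsum : ∑ e : Ehat χ T, α e = 1)
    (heig : ∀ (s : Fin (T + 1)) (g : Fin (s.1 + 1) → χ),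
      lam * α ⟨s, g⟩ = ∑ e : Ehat χ T, α e * Rker K μ p e ⟨s, g⟩) :
    ∀ e : Ehat χ T, α e = Aseq p lam e.1.1 * pathW K μ e.1.1 (pad e.2) := by
  suffices H : ∀ (n : ℕ) (s : Fin (T + 1)), s.1 = n → ∀ g : Fin (s.1 + 1) → χ,
      α ⟨s, g⟩ = Aseq p lam s.1 * pathW K μ s.1 (pad g) by
    rintro ⟨s, g⟩; exact H s.1 s rfl g
  intro n
  induction n using Nat.strong_induction_on with
  | _ n ih =>
    intro s hs g
    have heq := heig s g
    rw [sum_mul_Rker K μ p α s g, hαsum] at heq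
    have hd : ∀ t : Fin (T + 1),
        (if h : t.1 ≤ s.1 then
            α ⟨t, restr h g⟩ * ∏ i ∈ Finset.Ico t.1 s.1, K (pad g i) (pad g (i + 1)) else 0)
        = if t.1 ≤ s.1 then
            (if t.1 = s.1 then α ⟨s, g⟩
             else Aseq p lam t.1 * pathW K μ s.1 (pad g)) else 0 := by
      intro t
      by_cases h : t.1 ≤ s.1
      · rw [dif_pos h, if_pos h]
        by_cases ht : t.1 = s.1
        · rw [if_pos ht]
          have hts : t = s := Fin.ext ht
          subst hts
          have : restr h g = g := rfl
          rw [this, Finset.Ico_self, Finset.prod_empty, mul_one]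
        · rw [if_neg ht]
          have hlt : t.1 < n := hs ▸ lt_of_le_of_ne h ht
          rw [ih t.1 hlt t rfl (restr h g), mul_assoc, pathW_factor K μ h g]
      · rw [dif_neg h, if_neg h]
    rw [Finset.sum_congr rfl fun t _ => hd t,
      sum_fin_ite s (fun t => if t = s.1 then α ⟨s, g⟩
        else Aseq p lam t * pathW K μ s.1 (pad g)),
      Finset.sum_range_succ, if_pos rfl] at heq
    have hrest : ∑ t ∈ Finset.range s.1, (if t = s.1 then α ⟨s, g⟩
        else Aseq p lam t * pathW K μ s.1 (pad g))
        = (∑ t ∈ Finset.range s.1, Aseq p lam t) * pathW K μ s.1 (pad g) := by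
      rw [Finset.sum_mul]
      exact Finset.sum_congr rfl fun t ht =>
        if_neg (Nat.ne_of_lt (Finset.mem_range.mp ht))
    rw [hrest] at heq
    -- heq : lam * α ⟨s,g⟩ = p * W * 1 + (1-p) * ((∑ Aseq)*W + α⟨s,g⟩)
    have hkey := Aseq_key hp hp1 hlam s.1
    have hne : lam - (1 - p) ≠ 0 := ne_of_gt (by linarith)
    apply mul_left_cancel₀ hne
    linear_combination heq + pathW K μ s.1 (pad g) * hkey

end Main3

section Main4

lemma fix_unique {p : ℝ} (hp : 0 < p) (hp1 : p ≤ 1) (w : ℕ → ℝ) (hw : ∀ s, 0 ≤ w s) (T : ℕ)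
    (x y : ℝ) (hx : 1 ≤ x) (hy : 1 ≤ y)
    (hxe : x = p * ∑ s ∈ Finset.range (T + 1), w s * ((1 - (1 - p) / x)⁻¹) ^ (s + 1))
    (hye : y = p * ∑ s ∈ Finset.range (T + 1), w s * ((1 - (1 - p) / y)⁻¹) ^ (s + 1)) :
    x = y := by
  have mono : ∀ a b : ℝ, 1 ≤ a → a ≤ b →
      p * ∑ s ∈ Finset.range (T + 1), w s * ((1 - (1 - p) / b)⁻¹) ^ (s + 1)
        ≤ p * ∑ s ∈ Finset.range (T + 1), w s * ((1 - (1 - p) / a)⁻¹) ^ (s + 1) := by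
    intro a b ha hab
    have hb : 1 ≤ b := ha.trans hab
    have hpa := base_pos hp hp1 ha
    have hpb := base_pos hp hp1 hb
    refine mul_le_mul_of_nonneg_left (Finset.sum_le_sum fun s _ => ?_) hp.le
    refine mul_le_mul_of_nonneg_left (pow_le_pow_left₀ (inv_nonneg.mpr hpb.le) ?_ _) (hw s)
    refine inv_anti₀ hpa ?_
    have : (1 - p) / b ≤ (1 - p) / a := by
      apply div_le_div_of_nonneg_left (by linarith) (by linarith) hab
    linarith
  rcases le_total x y with h | h
  · exact le_antisymm h (by calc y = _ := hye
      _ ≤ _ := mono x y hx h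
      _ = x := hxe.symm)
  · exact (le_antisymm h (by calc x = _ := hxe
      _ ≤ _ := mono y x hy h
      _ = y := hye.symm)).symm

variable {χ : Type*} [Fintype χ] [DecidableEq χ]
variable (K : χ → χ → ℝ) (μ : χ → ℝ)

lemma Rker_nonneg (hK0 : ∀ x y, 0 ≤ K x y) (hμ0 : ∀ x, 0 ≤ μ x)
    {p : ℝ} (hp : 0 < p) (hp1 : p ≤ 1) {T : ℕ} (e e' : Ehat χ T) :
    0 ≤ Rker K μ p e e' := by
  unfold Rker
  have h1 : 0 ≤ pathW K μ e'.1.1 (pad e'.2) := pathW_nonneg K μ hK0 hμ0 _ _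
  have h2 : (0:ℝ) ≤ (if e.1.1 ≤ e'.1.1 ∧ ∀ i ∈ Finset.range (e.1.1 + 1),
      pad e'.2 i = pad e.2 i then
        ∏ i ∈ Finset.Ico e.1.1 e'.1.1, K (pad e'.2 i) (pad e'.2 (i + 1)) else 0) := by
    split
    · exact Finset.prod_nonneg fun _ _ => hK0 _ _
    · exact le_refl 0
  nlinarith

lemma rowsum_ge_one (hK0 : ∀ x y, 0 ≤ K x y) (hμ0 : ∀ x, 0 ≤ μ x) (hμ1 : ∑ x, μ x = 1)
    {p : ℝ} (hp : 0 < p) (hp1 : p ≤ 1) {T : ℕ} (e : Ehat χ T) :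
    1 ≤ ∑ e'' : Ehat χ T, Rker K μ p e e'' := by
  have hsplit : ∑ e'' : Ehat χ T, Rker K μ p e e''
      = p * (∑ e'' : Ehat χ T, pathW K μ e''.1.1 (pad e''.2))
        + (1 - p) * ∑ e'' : Ehat χ T, (if e.1.1 ≤ e''.1.1 ∧ ∀ i ∈ Finset.range (e.1.1 + 1),
            pad e''.2 i = pad e.2 i then
              ∏ i ∈ Finset.Ico e.1.1 e''.1.1, K (pad e''.2 i) (pad e''.2 (i + 1)) else 0) := by
    rw [Finset.mul_sum, Finset.mul_sum, ← Finset.sum_add_distrib]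
    exact Finset.sum_congr rfl fun _ _ => rfl
  have hW : 1 ≤ ∑ e'' : Ehat χ T, pathW K μ e''.1.1 (pad e''.2) := by
    have h0 : ∑ e'' : Ehat χ T, pathW K μ e''.1.1 (pad e''.2)
        = ∑ t ∈ Finset.range (T + 1), surv K μ t := by
      have := sum_prod_form K μ (T := T) (fun _ => 1)
      simpa using this
    rw [h0]
    calc (1:ℝ) = surv K μ 0 := (surv_zero K μ hμ1).symm
      _ ≤ _ := Finset.single_le_sum (fun s _ => surv_nonneg K μ hK0 hμ0 s)
          (Finset.mem_range.mpr (Nat.succ_pos T))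
  have hQ : 1 ≤ ∑ e'' : Ehat χ T, (if e.1.1 ≤ e''.1.1 ∧ ∀ i ∈ Finset.range (e.1.1 + 1),
      pad e''.2 i = pad e.2 i then
        ∏ i ∈ Finset.Ico e.1.1 e''.1.1, K (pad e''.2 i) (pad e''.2 (i + 1)) else 0) := by
    have hself : (if e.1.1 ≤ e.1.1 ∧ ∀ i ∈ Finset.range (e.1.1 + 1),
        pad e.2 i = pad e.2 i then
          ∏ i ∈ Finset.Ico e.1.1 e.1.1, K (pad e.2 i) (pad e.2 (i + 1)) else 0) = 1 := by
      rw [if_pos ⟨le_refl _, fun _ _ => rfl⟩, Finset.Ico_self, Finset.prod_empty]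
    calc (1:ℝ) = _ := hself.symm
      _ ≤ _ := Finset.single_le_sum (f := fun e'' : Ehat χ T =>
          (if e.1.1 ≤ e''.1.1 ∧ ∀ i ∈ Finset.range (e.1.1 + 1),
            pad e''.2 i = pad e.2 i then
              ∏ i ∈ Finset.Ico e.1.1 e''.1.1, K (pad e''.2 i) (pad e''.2 (i + 1)) else 0))
          (fun x _ => by skip
                         split
                         · exact Finset.prod_nonneg fun _ _ => hK0 _ _
                         · exact le_refl 0)
          (Finset.mem_univ e)
  rw [hsplit]
  nlinarith

end Main4

/-- Uniqueness of the normalized fixed point of equation (4.3): `ν` is the unique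
nonnegative vector `α` on `Ê` of total mass `1` satisfying
`α(e') = (∑_e α(e)·R(e,e')) / (∑_{e,e''} α(e)·R(e,e''))` for all `e'`. -/
theorem nu_unique_normalized_fixed_point
    {χ : Type*} [Fintype χ] [Nonempty χ] [DecidableEq χ]
    (K : χ → χ → ℝ) (hK0 : ∀ x y, 0 ≤ K x y) (hK1 : ∀ x, ∑ y, K x y ≤ 1)
    (μ : χ → ℝ) (hμ0 : ∀ x, 0 ≤ μ x) (hμ1 : ∑ x, μ x = 1)
    (p : ℝ) (hp : 0 < p) (hp1 : p ≤ 1) (T : ℕ)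
    (Z : ℝ) (hZ1 : 1 ≤ Z)
    (hZeq : Z = p * ∑ s ∈ Finset.range (T + 1),
      surv K μ s * ((1 - (1 - p) / Z)⁻¹) ^ (s + 1)) :
    ((∀ e : Ehat χ T, 0 ≤ nuE K μ p Z e) ∧
      (∑ e : Ehat χ T, nuE K μ p Z e = 1) ∧
      (∀ e' : Ehat χ T, nuE K μ p Z e'
        = (∑ e : Ehat χ T, nuE K μ p Z e * Rker K μ p e e')
          / (∑ e : Ehat χ T, ∑ e'' : Ehat χ T, nuE K μ p Z e * Rker K μ p e e''))) ∧
    (∀ α : Ehat χ T → ℝ, (∀ e, 0 ≤ α e) → (∑ e : Ehat χ T, α e = 1) →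
      (∀ e' : Ehat χ T, α e'
        = (∑ e : Ehat χ T, α e * Rker K μ p e e')
          / (∑ e : Ehat χ T, ∑ e'' : Ehat χ T, α e * Rker K μ p e e'')) →
      α = nuE K μ p Z) := by
  have hZ0 : (0:ℝ) < Z := lt_of_lt_of_le one_pos hZ1
  have hnu_eq : ∀ e : Ehat χ T, nuE K μ p Z e
      = Aseq p Z e.1.1 * pathW K μ e.1.1 (pad e.2) := fun _ => rfl
  have hnonneg : ∀ e : Ehat χ T, 0 ≤ nuE K μ p Z e := fun e => by
    rw [hnu_eq e]
    exact mul_nonneg (Aseq_nonneg hp hp1 hZ1 _) (pathW_nonneg K μ hK0 hμ0 _ _)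
  have hsum : ∑ e : Ehat χ T, nuE K μ p Z e = 1 := by
    rw [Finset.sum_congr rfl fun e _ => hnu_eq e, sum_prod_form K μ (Aseq p Z)]
    have h1 : ∑ t ∈ Finset.range (T + 1), Aseq p Z t * surv K μ t
        = Z⁻¹ * (p * ∑ t ∈ Finset.range (T + 1),
            surv K μ t * ((1 - (1 - p) / Z)⁻¹) ^ (t + 1)) := by
      rw [Finset.mul_sum, Finset.mul_sum]
      refine Finset.sum_congr rfl fun t _ => ?_
      unfold Aseq
      field_simp
    rw [h1, ← hZeq, inv_mul_cancel₀ (ne_of_gt hZ0)]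
  have hsum' : ∑ e : Ehat χ T, Aseq p Z e.1.1 * pathW K μ e.1.1 (pad e.2) = 1 := by
    rw [← Finset.sum_congr rfl fun e _ => hnu_eq e]; exact hsum
  have heigZ : ∀ e' : Ehat χ T,
      ∑ e : Ehat χ T, nuE K μ p Z e * Rker K μ p e e' = Z * nuE K μ p Z e' := fun e' => by
    have := eigen_prod_form K μ hp hp1 hZ1 hsum' e'.1 e'.2
    rw [hnu_eq e', Finset.sum_congr rfl fun e _ => by rw [hnu_eq e]]
    exact this
  have hdenomZ : ∑ e : Ehat χ T, ∑ e'' : Ehat χ T, nuE K μ p Z e * Rker K μ p e e'' = Z := by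
    rw [Finset.sum_comm]
    rw [Finset.sum_congr rfl fun e'' _ => heigZ e'', ← Finset.mul_sum, hsum, mul_one]
  refine ⟨⟨hnonneg, hsum, fun e' => ?_⟩, fun α hα0 hα1 hαfix => ?_⟩
  · rw [hdenomZ, heigZ e', mul_comm, mul_div_assoc, div_self (ne_of_gt hZ0), mul_one]
  · set D := ∑ e : Ehat χ T, ∑ e'' : Ehat χ T, α e * Rker K μ p e e'' with hDdef
    have hD1 : 1 ≤ D := by
      have h2 : D = ∑ e : Ehat χ T, α e * ∑ e'' : Ehat χ T, Rker K μ p e e'' :=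
        Finset.sum_congr rfl fun e _ => (Finset.mul_sum _ _ _).symm
      rw [h2, ← hα1]
      refine Finset.sum_le_sum fun e _ => ?_
      calc α e = α e * 1 := (mul_one _).symm
        _ ≤ _ := mul_le_mul_of_nonneg_left (rowsum_ge_one K μ hK0 hμ0 hμ1 hp hp1 e) (hα0 e)
    have hD0 : D ≠ 0 := ne_of_gt (lt_of_lt_of_le one_pos hD1)
    have heigD : ∀ (s : Fin (T + 1)) (g : Fin (s.1 + 1) → χ),
        D * α ⟨s, g⟩ = ∑ e : Ehat χ T, α e * Rker K μ p e ⟨s, g⟩ := fun s g => by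
      rw [hαfix ⟨s, g⟩, mul_div_cancel₀ _ hD0]
    have hform := fixed_point_form K μ hp hp1 α D hD1 hα1 heigD
    have hsumα : ∑ t ∈ Finset.range (T + 1), Aseq p D t * surv K μ t = 1 := by
      rw [← sum_prod_form K μ (Aseq p D), ← Finset.sum_congr rfl fun e _ => hform e]
      exact hα1
    have hDeq : D = p * ∑ s ∈ Finset.range (T + 1),
        surv K μ s * ((1 - (1 - p) / D)⁻¹) ^ (s + 1) := by
      have h3 : p * ∑ s ∈ Finset.range (T + 1), surv K μ s * ((1 - (1 - p) / D)⁻¹) ^ (s + 1)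
          = ∑ s ∈ Finset.range (T + 1), D * (Aseq p D s * surv K μ s) := by
        rw [Finset.mul_sum]
        refine Finset.sum_congr rfl fun s _ => ?_
        have hc : D * (p / D) = p := by field_simp
        unfold Aseq
        rw [show D * (p / D * ((1 - (1 - p) / D)⁻¹) ^ (s + 1) * surv K μ s)
          = (D * (p / D)) * (((1 - (1 - p) / D)⁻¹) ^ (s + 1) * surv K μ s) from by ring, hc]
        ring
      rw [h3, ← Finset.mul_sum, hsumα, mul_one]
    have hDZ : D = Z := fix_unique hp hp1 (surv K μ) (surv_nonneg K μ hK0 hμ0) T D Z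
      hD1 hZ1 hDeq hZeq
    funext e
    rw [hform e, hDZ, hnu_eq e]
end
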